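/- Let a₀, b₀, …, b_n ∈ ℂ and let f ∈ C^∞([0,1], ℂ) with g(t) := ∫₀ᵗ f(τ) dτ. Set u(t) := e^{−a₀ t} f(t) and λ(j) := Σ_{i=0}^n C(i,j)(−a₀)^{i−j} b_i. Then Σ_{i=0}^n ∫₀ᵗ b_i e^{−a₀(t−τ)} u^{(i)}(τ) dτ = e^{−a₀ t}·( Σ_{j=0}^{n−1} λ(j+1) f^{(j)}(t) − Σ_{j=0}^{n−1} λ(j+1) f^{(j)}(0) + λ(0) g(t) ) for all t ∈ [0,1], and moreover λ(0) = P_u(−a₀) where P_u(X) = Σ_{i=0}^n b_i X^i. -/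

import Mathlib

open Set Finset Polynomial

private lemma pascal_sum_aux (i : ℕ) (x : ℂ) (y : ℕ → ℂ) :
    x * (∑ j ∈ Finset.range (i+1), (i.choose j : ℂ) * x ^ (i - j) * y j) +
      ∑ j ∈ Finset.range (i+1), (i.choose j : ℂ) * x ^ (i - j) * y (j+1)
    = ∑ j ∈ Finset.range (i+2), ((i+1).choose j : ℂ) * x ^ (i+1 - j) * y j := by
  have hL1 : x * (∑ j ∈ Finset.range (i+1), (i.choose j : ℂ) * x ^ (i - j) * y j)
      = ∑ j ∈ Finset.range (i+1), (i.choose j : ℂ) * x ^ (i+1 - j) * y j := by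
    rw [Finset.mul_sum]
    refine Finset.sum_congr rfl fun j hj => ?_
    have hji : j ≤ i := Nat.lt_succ_iff.mp (Finset.mem_range.mp hj)
    rw [Nat.succ_sub hji, pow_succ]
    ring
  rw [hL1]
  rw [Finset.sum_range_succ' (fun j => ((i+1).choose j : ℂ) * x ^ (i+1 - j) * y j) (i+1),
      Finset.sum_range_succ' (fun j => ((i.choose j : ℂ)) * x ^ (i+1 - j) * y j) i]
  have hext : ∑ j ∈ Finset.range i, (i.choose (j+1) : ℂ) * x ^ (i+1 - (j+1)) * y (j+1)
      = ∑ j ∈ Finset.range (i+1), (i.choose (j+1) : ℂ) * x ^ (i - j) * y (j+1) := by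
    rw [Finset.sum_range_succ]
    simp [Nat.succ_sub_succ]
  rw [hext]
  rw [add_right_comm, ← Finset.sum_add_distrib]
  have : ∑ j ∈ Finset.range (i+1),
      ((i.choose (j+1) : ℂ) * x ^ (i - j) * y (j+1) + (i.choose j : ℂ) * x ^ (i - j) * y (j+1))
      = ∑ j ∈ Finset.range (i+1), ((i+1).choose (j+1) : ℂ) * x ^ (i+1 - (j+1)) * y (j+1) := by
    refine Finset.sum_congr rfl fun j hj => ?_
    rw [Nat.succ_sub_succ, Nat.choose_succ_succ]
    push_cast
    ring
  rw [this]
  simp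

private lemma lemA (a₀ : ℂ) (f u : ℝ → ℂ)
    (hf : ContDiffOn ℝ (⊤ : ℕ∞) f (Set.Icc 0 1))
    (hu : ∀ t : ℝ, u t = Complex.exp (-a₀ * t) * f t) (i : ℕ) :
    ∀ τ ∈ Set.Icc (0:ℝ) 1, iteratedDerivWithin i u (Set.Icc 0 1) τ
      = Complex.exp (-a₀ * τ) *
        ∑ j ∈ Finset.range (i+1), (i.choose j : ℂ) * (-a₀) ^ (i - j) *
          iteratedDerivWithin j f (Set.Icc 0 1) τ := by
  have hs : UniqueDiffOn ℝ (Set.Icc (0:ℝ) 1) := uniqueDiffOn_Icc one_pos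
  induction i with
  | zero => intro τ hτ; simp [hu τ]
  | succ i ih =>
    intro τ hτ
    rw [iteratedDerivWithin_succ]
    rw [derivWithin_congr ih (ih τ hτ)]
    have hj : ∀ j : ℕ, HasDerivWithinAt (iteratedDerivWithin j f (Set.Icc 0 1))
        (iteratedDerivWithin (j+1) f (Set.Icc 0 1) τ) (Set.Icc 0 1) τ := by
      intro j
      have hd := ((hf.differentiableOn_iteratedDerivWithin (m := j) (by exact_mod_cast ENat.coe_lt_top j) hs) τ hτ).hasDerivWithinAt
      rwa [iteratedDerivWithin_succ]
    have hS : HasDerivWithinAt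
        (fun τ => ∑ j ∈ Finset.range (i+1), (i.choose j : ℂ) * (-a₀) ^ (i - j) *
          iteratedDerivWithin j f (Set.Icc 0 1) τ)
        (∑ j ∈ Finset.range (i+1), (i.choose j : ℂ) * (-a₀) ^ (i - j) *
          iteratedDerivWithin (j+1) f (Set.Icc 0 1) τ) (Set.Icc 0 1) τ :=
      HasDerivWithinAt.fun_sum fun j _ => (hj j).const_mul _
    have hexp : HasDerivAt (fun t : ℝ => Complex.exp (-a₀ * t)) (-a₀ * Complex.exp (-a₀ * τ)) τ := by
      have h1 : HasDerivAt (fun t : ℝ => ((t : ℂ))) 1 τ := Complex.ofRealCLM.hasDerivAt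
      simpa [mul_comm] using (h1.const_mul (-a₀)).cexp
    have hmul := (hexp.hasDerivWithinAt.fun_mul hS).derivWithin (hs τ hτ)
    rw [hmul]
    rw [← pascal_sum_aux i (-a₀) (fun j => iteratedDerivWithin j f (Set.Icc 0 1) τ)]
    ring

private lemma ftc_aux (f : ℝ → ℂ) (hf : ContDiffOn ℝ (⊤ : ℕ∞) f (Set.Icc 0 1)) (k : ℕ)
    {t : ℝ} (ht : t ∈ Set.Icc (0:ℝ) 1) :
    ∫ τ in (0:ℝ)..t, iteratedDerivWithin (k+1) f (Set.Icc 0 1) τ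
      = iteratedDerivWithin k f (Set.Icc 0 1) t - iteratedDerivWithin k f (Set.Icc 0 1) 0 := by
  have hs : UniqueDiffOn ℝ (Set.Icc (0:ℝ) 1) := uniqueDiffOn_Icc one_pos
  obtain ⟨ht0, ht1⟩ := ht
  have hsub : Set.Icc (0:ℝ) t ⊆ Set.Icc 0 1 := Set.Icc_subset_Icc le_rfl ht1
  apply intervalIntegral.integral_eq_sub_of_hasDeriv_right_of_le ht0
  · exact (hf.continuousOn_iteratedDerivWithin (m := k) (by exact_mod_cast le_top) hs).mono hsub
  · intro x hx
    have hx1 : x ∈ Set.Ioo (0:ℝ) 1 := ⟨hx.1, lt_of_lt_of_le hx.2 ht1⟩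
    have hmem : Set.Icc (0:ℝ) 1 ∈ nhds x := Icc_mem_nhds hx1.1 hx1.2
    have hd : HasDerivWithinAt (iteratedDerivWithin k f (Set.Icc 0 1))
        (iteratedDerivWithin (k+1) f (Set.Icc 0 1) x) (Set.Icc 0 1) x := by
      have hd := ((hf.differentiableOn_iteratedDerivWithin (m := k) (by exact_mod_cast ENat.coe_lt_top k) hs) x
        ⟨hx1.1.le, hx1.2.le⟩).hasDerivWithinAt
      rwa [iteratedDerivWithin_succ]
    exact (hd.hasDerivAt hmem).hasDerivWithinAt
  · have hc := ((hf.continuousOn_iteratedDerivWithin (m := k+1) (by exact_mod_cast le_top) hs).mono hsub)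
    exact hc.intervalIntegrable_of_Icc ht0

/-- The key integral identity: with `u(t) = e^{-a₀ t} f(t)`, `g(t) = ∫₀ᵗ f`, and
`λ j = ∑_{i=0}^n C(i,j) (-a₀)^{i-j} b i`, one has
`∑_{i=0}^n ∫₀ᵗ b_i e^{-a₀(t-τ)} u^{(i)}(τ) dτ
  = e^{-a₀ t} (∑_{j<n} λ(j+1) f^{(j)}(t) - ∑_{j<n} λ(j+1) f^{(j)}(0) + λ(0) g(t))`,
and `λ 0 = P_u(-a₀)` for `P_u(X) = ∑_{i=0}^n b_i X^i`. -/
theorem integral_identity_first_order (n : ℕ) (a₀ : ℂ) (b : ℕ → ℂ) (f : ℝ → ℂ)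
    (hf : ContDiffOn ℝ (⊤ : ℕ∞) f (Icc 0 1))
    (g : ℝ → ℂ) (hg : ∀ t, g t = ∫ τ in (0:ℝ)..t, f τ)
    (u : ℝ → ℂ) (hu : ∀ t : ℝ, u t = Complex.exp (-a₀ * t) * f t)
    (lam : ℕ → ℂ)
    (hlam : ∀ j, lam j = ∑ i ∈ Finset.range (n + 1), (i.choose j : ℂ) * (-a₀) ^ (i - j) * b i) :
    (∀ t ∈ Icc (0:ℝ) 1,
      (∑ i ∈ Finset.range (n + 1),
          ∫ τ in (0:ℝ)..t, b i * Complex.exp (-a₀ * (t - τ)) * iteratedDerivWithin i u (Icc 0 1) τ) =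
        Complex.exp (-a₀ * t) *
          ((∑ j ∈ Finset.range n, lam (j + 1) * iteratedDerivWithin j f (Icc 0 1) t) -
            (∑ j ∈ Finset.range n, lam (j + 1) * iteratedDerivWithin j f (Icc 0 1) 0) +
            lam 0 * g t)) ∧
    lam 0 = (∑ i ∈ Finset.range (n + 1), C (b i) * X ^ i).eval (-a₀) := by
  have hs : UniqueDiffOn ℝ (Set.Icc (0:ℝ) 1) := uniqueDiffOn_Icc one_pos
  constructor
  · intro t ht
    obtain ⟨ht0, ht1⟩ := ht
    have hsub : Set.Icc (0:ℝ) t ⊆ Set.Icc 0 1 := Set.Icc_subset_Icc le_rfl ht1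
    set I : ℕ → ℂ := fun j => ∫ τ in (0:ℝ)..t, iteratedDerivWithin j f (Set.Icc 0 1) τ with hI
    -- step 1 : each integral
    have hint : ∀ i ∈ Finset.range (n+1),
        (∫ τ in (0:ℝ)..t, b i * Complex.exp (-a₀ * (t - τ)) * iteratedDerivWithin i u (Icc 0 1) τ)
        = ∑ j ∈ Finset.range (i+1),
            b i * Complex.exp (-a₀ * t) * ((i.choose j : ℂ) * (-a₀) ^ (i - j)) * I j := by
      intro i _
      have hcongr : ∀ τ ∈ Set.uIcc (0:ℝ) t,
          b i * Complex.exp (-a₀ * (t - τ)) * iteratedDerivWithin i u (Icc 0 1) τ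
          = ∑ j ∈ Finset.range (i+1),
              b i * Complex.exp (-a₀ * t) * ((i.choose j : ℂ) * (-a₀) ^ (i - j)) *
                iteratedDerivWithin j f (Set.Icc 0 1) τ := by
        intro τ hτ
        rw [Set.uIcc_of_le ht0] at hτ
        rw [lemA a₀ f u hf hu i τ (hsub hτ), Finset.mul_sum, Finset.mul_sum]
        refine Finset.sum_congr rfl fun j _ => ?_
        have hE : Complex.exp (-a₀ * ((t:ℂ) - (τ:ℂ))) * Complex.exp (-a₀ * (τ:ℂ))
            = Complex.exp (-a₀ * (t:ℂ)) := by
          rw [← Complex.exp_add]; congr 1; ring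
        linear_combination (b i * ((i.choose j : ℂ) * (-a₀) ^ (i - j)) *
          iteratedDerivWithin j f (Set.Icc 0 1) τ) * hE
      rw [intervalIntegral.integral_congr hcongr]
      rw [intervalIntegral.integral_finset_sum]
      · exact Finset.sum_congr rfl fun j _ => intervalIntegral.integral_const_mul _ _
      · intro j _
        apply IntervalIntegrable.const_mul
        exact ((hf.continuousOn_iteratedDerivWithin (m := j) (by exact_mod_cast le_top) hs).mono hsub).intervalIntegrable_of_Icc ht0
    rw [Finset.sum_congr rfl hint]
    -- step 2 : extend inner sums and swap
    have hext : ∀ i ∈ Finset.range (n+1),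
        ∑ j ∈ Finset.range (i+1),
            b i * Complex.exp (-a₀ * t) * ((i.choose j : ℂ) * (-a₀) ^ (i - j)) * I j
        = ∑ j ∈ Finset.range (n+1),
            b i * Complex.exp (-a₀ * t) * ((i.choose j : ℂ) * (-a₀) ^ (i - j)) * I j := by
      intro i hi
      refine Finset.sum_subset ?_ ?_
      · exact Finset.range_subset_range.mpr (Nat.succ_le_succ (Nat.lt_succ_iff.mp (Finset.mem_range.mp hi)))
      · intro j _ hj
        have hij : i < j := by
          rcases Nat.lt_or_ge i j with h | h
          · exact h
          · exact absurd (Finset.mem_range.mpr (Nat.lt_succ_of_le h)) hj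
        rw [Nat.choose_eq_zero_of_lt hij]
        simp
    rw [Finset.sum_congr rfl hext, Finset.sum_comm]
    have hcol : ∀ j ∈ Finset.range (n+1),
        ∑ i ∈ Finset.range (n+1),
            b i * Complex.exp (-a₀ * t) * ((i.choose j : ℂ) * (-a₀) ^ (i - j)) * I j
        = Complex.exp (-a₀ * t) * lam j * I j := by
      intro j _
      rw [hlam j, Finset.mul_sum, Finset.sum_mul]
      exact Finset.sum_congr rfl fun i _ => by ring
    rw [Finset.sum_congr rfl hcol]
    -- step 3 : split off j = 0 and apply FTC
    rw [Finset.sum_range_succ' (fun j => Complex.exp (-a₀ * t) * lam j * I j) n]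
    have hI0 : I 0 = g t := by
      have h0 : I 0 = ∫ τ in (0:ℝ)..t, f τ := by
        simp only [hI, iteratedDerivWithin_zero]
      rw [h0, hg t]
    have hIs : ∀ j ∈ Finset.range n,
        Complex.exp (-a₀ * t) * lam (j+1) * I (j+1)
        = Complex.exp (-a₀ * t) * lam (j+1) * iteratedDerivWithin j f (Icc 0 1) t
          - Complex.exp (-a₀ * t) * lam (j+1) * iteratedDerivWithin j f (Icc 0 1) 0 := by
      intro j _
      have h2 : I (j+1) = iteratedDerivWithin j f (Set.Icc 0 1) t
          - iteratedDerivWithin j f (Set.Icc 0 1) 0 := ftc_aux f hf j ⟨ht0, ht1⟩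
      rw [h2]; ring
    rw [Finset.sum_congr rfl hIs, hI0, Finset.sum_sub_distrib]
    rw [mul_add, mul_sub, Finset.mul_sum, Finset.mul_sum]
    congr 1
    · congr 1 <;> exact Finset.sum_congr rfl fun j _ => by ring
    · ring
  · rw [hlam 0]
    rw [Polynomial.eval_finset_sum]
    refine Finset.sum_congr rfl fun i _ => ?_
    simp only [Nat.choose_zero_right, Nat.cast_one, one_mul, Nat.sub_zero, eval_mul, eval_C,
      eval_pow, eval_X]
    ring
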